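/- arXiv:1202.5772 — 2 statements merged into one kernel-verified Lean document; each statement's English description precedes it below -/
import Mathlib

section
/- Let G be a finite abelian group of even order 2m with a unique element z of order 2, and let U = {1, z}. Then for every x in G, V_{G→U}(x) = x^m, and x is a square in G if and only if V_{G→U}(x) = 1. -/
/-!
Since `G` is abelian, the transfer to `U = ⟨z⟩` is `x ↦ x ^ [G : U] = x ^ m`. The squaring map has
kernel `U`, so the squares form a subgroup of index `2`, contained in the kernel of `x ↦ x ^ m`.
That kernel is proper: write `2m = 2 ^ (a + 1) * r` with `r` odd; if `x ^ m = 1` held throughout,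
a subgroup of order `2 ^ (a + 1)` would satisfy `x ^ (2 ^ a) = 1`, but as `y ^ 2 = 1` has only two
solutions, `y ^ (2 ^ a) = 1` has at most `2 ^ a`. Hence the squares are exactly the solutions of
`x ^ m = 1`.
-/

open Subgroup

namespace Subgroup

variable {G G' : Type*} [Group G] [Group G']

theorem card_comap_le_card_ker_mul (f : G →* G') (S : Subgroup G') [Finite S] :
    Nat.card (S.comap f) ≤ Nat.card f.ker * Nat.card S :=
  calc Nat.card (S.comap f) = Nat.card f.ker * Nat.card ((S.comap f).map f) := by
        rw [← relIndex_ker, ← relIndex_bot_left, ← relIndex_bot_left,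
          relIndex_mul_relIndex _ _ _ bot_le (f.ker_le_comap S)]
    _ ≤ Nat.card f.ker * Nat.card S := Nat.mul_le_mul_left _ (card_le_of_le (map_comap_le f S))

theorem eq_of_le_of_ne_top_of_index_prime {H K : Subgroup G} (hle : H ≤ K) (hK : K ≠ ⊤)
    (hH : H.index.Prime) : H = K := by
  have hKH : K.index = H.index := by
    refine ((hH.eq_one_or_self_of_dvd _ (index_dvd_of_le hle)).resolve_left ?_)
    rwa [index_eq_one]
  have hrel : H.relIndex K = 1 := by
    have := relIndex_mul_index hle
    rw [hKH] at this
    exact (Nat.mul_eq_right hH.ne_zero).mp this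
  exact le_antisymm hle (relIndex_eq_one.mp hrel)

end Subgroup

namespace MonoidHom

theorem transfer_eq_pow_index_of_comm {G A : Type*} [CommGroup G] [CommGroup A]
    (H : Subgroup G) [H.FiniteIndex] (ϕ : H →* A) (g : G) :
    transfer ϕ g = ϕ ⟨g ^ H.index, H.pow_index_mem g⟩ :=
  transfer_eq_pow ϕ g fun _ g₀ _ ↦ by rw [mul_comm g₀⁻¹, inv_mul_cancel_right]

end MonoidHom

section PowKernels

variable {G : Type*} [CommGroup G]

theorem ker_powMonoidHom_mul (a b : ℕ) :
    (powMonoidHom (a * b) : G →* G).ker = (powMonoidHom b : G →* G).ker.comap (powMonoidHom a) := by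
  ext g
  simp only [MonoidHom.mem_ker, mem_comap, powMonoidHom_apply, pow_mul]

theorem card_ker_powMonoidHom_pow_le [Finite G] (n j : ℕ) :
    Nat.card (powMonoidHom (n ^ j) : G →* G).ker ≤ Nat.card (powMonoidHom n : G →* G).ker ^ j := by
  induction j with
  | zero => simp [MonoidHom.mem_ker]
  | succ j ih =>
    rw [pow_succ', ker_powMonoidHom_mul, pow_succ']
    exact (card_comap_le_card_ker_mul _ _).trans (Nat.mul_le_mul_left _ ih)

theorem ker_powMonoidHom_two_eq_zpowers {z : G} (hz : orderOf z = 2)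
    (hzuniq : ∀ y : G, orderOf y = 2 → y = z) :
    (powMonoidHom 2 : G →* G).ker = zpowers z := by
  refine le_antisymm (fun y hy ↦ ?_) (zpowers_le.mpr (hz ▸ pow_orderOf_eq_one z))
  rcases (Nat.dvd_prime Nat.prime_two).mp (orderOf_dvd_of_pow_eq_one hy) with h1 | h2
  · rw [orderOf_eq_one_iff.mp h1]
    exact one_mem _
  · rw [hzuniq y h2]
    exact mem_zpowers z

variable [Finite G] {m : ℕ}

theorem exists_pow_ne_one_of_card_ker_sq_le_two
    (hker : Nat.card (powMonoidHom 2 : G →* G).ker ≤ 2) (hcard : Nat.card G = 2 * m) :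
    ∃ g : G, g ^ m ≠ 1 := by
  by_contra! hall
  have hm : m ≠ 0 := by
    have := Nat.card_pos (α := G)
    omega
  obtain ⟨a, r, hr, rfl⟩ := Nat.exists_eq_two_pow_mul_odd hm
  have : Fact (Nat.Prime 2) := ⟨Nat.prime_two⟩
  obtain ⟨P, hP⟩ := Sylow.exists_subgroup_card_pow_prime 2 (n := a + 1) (G := G)
    ⟨r, by rw [hcard]; ring⟩
  have hgcd : Nat.gcd (2 ^ (a + 1)) (2 ^ a * r) = 2 ^ a := by
    rw [pow_succ, Nat.gcd_mul_left, Nat.Coprime.gcd_eq_one (Nat.coprime_two_left.mpr hr), mul_one]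
  have hle : P ≤ (powMonoidHom (2 ^ a) : G →* G).ker := fun g hg ↦ by
    have hP1 : g ^ 2 ^ (a + 1) = 1 := by
      rw [← hP]
      exact orderOf_dvd_iff_pow_eq_one.mp ((orderOf_mk g hg).symm ▸ orderOf_dvd_natCard _)
    rw [MonoidHom.mem_ker, powMonoidHom_apply, ← hgcd]
    exact pow_gcd_eq_one.mpr ⟨hP1, hall g⟩
  have : 2 ^ (a + 1) ≤ 2 ^ a :=
    calc 2 ^ (a + 1) = Nat.card P := hP.symm
      _ ≤ Nat.card (powMonoidHom (2 ^ a) : G →* G).ker := card_le_of_le hle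
      _ ≤ Nat.card (powMonoidHom 2 : G →* G).ker ^ a := card_ker_powMonoidHom_pow_le 2 a
      _ ≤ 2 ^ a := Nat.pow_le_pow_left hker a
  exact (Nat.pow_lt_pow_succ one_lt_two).not_ge this

theorem range_powMonoidHom_two_eq_ker_powMonoidHom
    (hker : Nat.card (powMonoidHom 2 : G →* G).ker = 2) (hcard : Nat.card G = 2 * m) :
    (powMonoidHom 2 : G →* G).range = (powMonoidHom m : G →* G).ker := by
  refine eq_of_le_of_ne_top_of_index_prime ?_ ?_ (by rw [index_range, hker]; exact Nat.prime_two)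
  · rintro _ ⟨y, rfl⟩
    rw [MonoidHom.mem_ker, powMonoidHom_apply, powMonoidHom_apply, ← pow_mul, ← hcard]
    exact pow_card_eq_one'
  · obtain ⟨g, hg⟩ := exists_pow_ne_one_of_card_ker_sq_le_two hker.le hcard
    intro htop
    exact hg (by simpa using (eq_top_iff' _).mp htop g)

end PowKernels

theorem transfer_to_order_two_subgroup {G : Type*} [CommGroup G] [Finite G]
    (m : ℕ) (hcard : Nat.card G = 2 * m)
    (z : G) (hz : orderOf z = 2) (hzuniq : ∀ y : G, orderOf y = 2 → y = z)
    (x : G) :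
    ((MonoidHom.transfer (MonoidHom.id (Subgroup.zpowers z)) x : Subgroup.zpowers z) : G)
        = x ^ m ∧
    ((∃ y : G, y ^ 2 = x) ↔ MonoidHom.transfer (MonoidHom.id (Subgroup.zpowers z)) x = 1) := by
  have hker := ker_powMonoidHom_two_eq_zpowers hz hzuniq
  have hcardU : Nat.card (zpowers z) = 2 := by rw [Nat.card_zpowers, hz]
  have hindex : (zpowers z).index = m := by
    have := card_mul_index (zpowers z)
    rw [hcardU, hcard] at this
    omega
  have htransfer : ((MonoidHom.transfer (MonoidHom.id (zpowers z)) x : zpowers z) : G) = x ^ m := by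
    rw [MonoidHom.transfer_eq_pow_index_of_comm, MonoidHom.id_apply, Subgroup.coe_mk, hindex]
  refine ⟨htransfer, ?_⟩
  have hsq := range_powMonoidHom_two_eq_ker_powMonoidHom (hker ▸ hcardU) hcard
  rw [← OneMemClass.coe_eq_one, htransfer]
  simpa [MonoidHom.mem_range, MonoidHom.mem_ker] using SetLike.ext_iff.mp hsq x
end

section
/- Euler's version of quadratic reciprocity: if d is a nonzero integer and p, q are odd primes not dividing d with p ≡ q mod 4d, then d is a quadratic residue mod p if and only if d is a quadratic residue mod q. -/
/-! Both sides are equivalent to the Jacobi symbol `J(d | ·)` being `1`, and by quadratic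
reciprocity `J(d | b)` for odd `b` depends only on `b` modulo `4 |d|`. -/

theorem jacobiSym.eq_of_emod_four_mul_abs_eq {a : ℤ} {b c : ℕ} (hb : Odd b) (hc : Odd c)
    (h : (b : ℤ) % (4 * |a|) = (c : ℤ) % (4 * |a|)) : jacobiSym a b = jacobiSym a c := by
  have hmod : b % (4 * a.natAbs) = c % (4 * a.natAbs) := by
    rw [Int.abs_eq_natAbs] at h
    exact_mod_cast h
  rw [jacobiSym.mod_right a hb, jacobiSym.mod_right a hc, hmod]

theorem ZMod.isSquare_intCast_iff_jacobiSym_eq_one {a : ℤ} {p : ℕ} [Fact p.Prime]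
    (ha : (a : ZMod p) ≠ 0) : IsSquare (a : ZMod p) ↔ jacobiSym a p = 1 := by
  rw [← legendreSym.eq_one_iff p ha, jacobiSym.legendreSym.to_jacobiSym]

theorem euler_version_quadratic_reciprocity_general (d : ℤ)
    (p q : ℕ) (hp : p.Prime) (hq : q.Prime) (hp2 : p ≠ 2) (hq2 : q ≠ 2)
    (hpd : ¬ (p : ℤ) ∣ d) (hqd : ¬ (q : ℤ) ∣ d)
    (hcong : (p : ℤ) % (4 * |d|) = (q : ℤ) % (4 * |d|)) :
    IsSquare (d : ZMod p) ↔ IsSquare (d : ZMod q) := by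
  have : Fact p.Prime := ⟨hp⟩
  have : Fact q.Prime := ⟨hq⟩
  have hdp : (d : ZMod p) ≠ 0 := mt (ZMod.intCast_zmod_eq_zero_iff_dvd d p).1 hpd
  have hdq : (d : ZMod q) ≠ 0 := mt (ZMod.intCast_zmod_eq_zero_iff_dvd d q).1 hqd
  rw [ZMod.isSquare_intCast_iff_jacobiSym_eq_one hdp,
    ZMod.isSquare_intCast_iff_jacobiSym_eq_one hdq,
    jacobiSym.eq_of_emod_four_mul_abs_eq (hp.odd_of_ne_two hp2) (hq.odd_of_ne_two hq2) hcong]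

theorem euler_version_quadratic_reciprocity (d : ℤ) (hd : d ≠ 0)
    (p q : ℕ) (hp : p.Prime) (hq : q.Prime) (hp2 : p ≠ 2) (hq2 : q ≠ 2)
    (hpd : ¬ (p : ℤ) ∣ d) (hqd : ¬ (q : ℤ) ∣ d)
    (hcong : (p : ℤ) % (4 * |d|) = (q : ℤ) % (4 * |d|)) :
    IsSquare (d : ZMod p) ↔ IsSquare (d : ZMod q) :=
  euler_version_quadratic_reciprocity_general d p q hp hq hp2 hq2 hpd hqd hcong
end
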